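/- With the notation of the context, assume |∑_{i∈ℤ} (α_i − β_i) i²| ≤ 10 ∑_{i∈ℤ} |α_i − β_i|. Then ∏_{i∈ℤ} (1 + |α_i − β_i| ⟨i⟩) ≤ e^{27} (1 + |π|)³ N⁶ ∏_{l=3}^N n̂_l^{15/2}. -/

import Mathlib

open scoped BigOperators

/-- `⟨j⟩ := max(|j|,1)` as a real number. -/
noncomputable def jap (j : ℤ) : ℝ := max (|(j : ℝ)|) 1

/-!
Write `d i = α i - β i`. The at most three indices with `|i| ≤ 1` contribute at most `(2N)³`.
For `|i| ≥ 2` Bernoulli gives `1 + |d i|⟨i⟩ ≤ (2⟨i⟩)^|d i|`, so the rest of the product is at most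
`∏ 2x` over the values `⟨i⟩` repeated `|d i|` times. Listed decreasingly as `x₁ ≥ x₂ ≥ ⋯`, these
values form a sublist of `n̂`, hence `∏_{k ≥ 3} 2xₖ ≤ ∏_{l ≥ 3} n̂ₗ²`.

To bound `x₁ x₂`, note that every index other than the one or two carrying `x₁, x₂` has
`|i| ≤ r := n̂₃`, so the hypothesis and the momentum leave `|∑_T d i i²| ≤ N (10 + r²)` and
`|∑_T d i i| ≤ |π| + N r` for the set `T` of these top indices. If `T = {u}` this gives
`x₁ x₂ ≤ |d u| u²` at once. If `T = {u, v}`, write `a = d u`, `b = d v`: eliminating `u` bounds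
`v²` (and symmetrically `u²`) unless `a + b = 0`, in which case `a (u - v)` is a nonzero integer
and `|u + v|`, `|u - v|` are controlled directly. Either way `x₁ x₂ = O((N (1 + |π|) (1 + r²))²)`,
and `(1 + r²)² ≤ 4 n̂₃⁴` is absorbed by the exponent `15/2`.
-/

theorem Multiset.exists_coe_eq_pairwise_map_ge {ι R : Type*} [LinearOrder R]
    (s : Multiset ι) (f : ι → R) :
    ∃ l : List ι, (l : Multiset ι) = s ∧ (l.map f).Pairwise (· ≥ ·) := by
  refine ⟨s.toList.mergeSort (fun a b => decide (f b ≤ f a)), ?_, ?_⟩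
  · rw [Multiset.coe_eq_coe.mpr (List.mergeSort_perm _ _), Multiset.coe_toList]
  · refine List.pairwise_map.mpr ((List.pairwise_mergeSort ?_ ?_ _).imp (by simp))
    · simpa using fun a b c hab hbc => hbc.trans hab
    · simpa using fun a b => le_total (f b) (f a)

theorem List.Sublist.prod_le_prod_of_one_le {R : Type*} [CommSemiring R] [PartialOrder R]
    [IsOrderedRing R] {l₁ l₂ : List R} (h : l₁.Sublist l₂) (h₁ : ∀ x ∈ l₂, 1 ≤ x) :
    l₁.prod ≤ l₂.prod := by
  induction h with
  | slnil => rfl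
  | cons a _ ih =>
    simp only [List.mem_cons, forall_eq_or_imp] at h₁
    rw [List.prod_cons]
    exact (ih h₁.2).trans (le_mul_of_one_le_left (List.prod_nonneg fun x hx =>
      zero_le_one.trans (h₁.2 x hx)) h₁.1)
  | cons_cons a h ih =>
    simp only [List.mem_cons, forall_eq_or_imp] at h₁
    rw [List.prod_cons, List.prod_cons]
    exact mul_le_mul_of_nonneg_left (ih h₁.2) (zero_le_one.trans h₁.1)

theorem List.le_headD_of_pairwise_ge {R : Type*} [Preorder R] {l : List R} {x : R} (d : R)
    (hl : l.Pairwise (· ≥ ·)) (hx : x ∈ l) : x ≤ l.headD d := by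
  cases l with
  | nil => simp at hx
  | cons a t =>
    rcases List.mem_cons.mp hx with rfl | hx
    · exact le_rfl
    · exact List.rel_of_pairwise_cons hl hx

theorem List.prod_map_two_mul_le {l l' : List ℝ} (hl : ∀ x ∈ l, 2 ≤ x) (hl' : ∀ x ∈ l', 1 ≤ x)
    (h : (l.drop 2).Sublist l') :
    (l.map (2 * ·)).prod ≤ 4 * (l.getD 0 1 * l.getD 1 1) * (l'.map (· ^ 2)).prod := by
  have hsq : ∀ y ∈ l'.map (· ^ 2), 1 ≤ y := fun y hy => by
    obtain ⟨x, hx, rfl⟩ := List.mem_map.mp hy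
    nlinarith [hl' x hx]
  have htail : ((l.drop 2).map (2 * ·)).prod ≤ (l'.map (· ^ 2)).prod := calc
    ((l.drop 2).map (2 * ·)).prod ≤ ((l.drop 2).map (· ^ 2)).prod :=
      List.prod_map_le_prod_map₀ _ _ (fun x hx => by linarith [hl x (List.mem_of_mem_drop hx)])
        fun x hx => by nlinarith [hl x (List.mem_of_mem_drop hx)]
    _ ≤ (l'.map (· ^ 2)).prod := (h.map _).prod_le_prod_of_one_le hsq
  have hQ : 1 ≤ (l'.map (· ^ 2)).prod := List.one_le_prod hsq
  rcases l with _ | ⟨x, _ | ⟨y, t⟩⟩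
  · simp only [List.map_nil, List.prod_nil, List.getD_nil]
    linarith
  · have := hl x (by simp)
    simp only [List.map_cons, List.map_nil, List.prod_cons, List.prod_nil, List.getD_cons_zero,
      List.getD_cons_succ, List.getD_nil]
    nlinarith
  · have hx := hl x (by simp)
    have hy := hl y (by simp)
    simp only [List.map_cons, List.prod_cons, List.getD_cons_zero, List.getD_cons_succ,
      List.drop_succ_cons, List.drop_zero] at htail ⊢
    have : 0 ≤ x * y := by positivity
    nlinarith

theorem List.one_add_sq_headD_sq_mul_prod_le {l : List ℝ} (hl : ∀ x ∈ l, 1 ≤ x) :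
    (1 + l.headD 1 ^ 2) ^ 2 * (l.map (· ^ 2)).prod ≤ 4 * (l.map (· ^ ((15 : ℝ) / 2))).prod := by
  have hpow : ∀ x : ℝ, 1 ≤ x → ∀ n : ℕ, (n : ℝ) ≤ 15 / 2 → x ^ n ≤ x ^ ((15 : ℝ) / 2) :=
    fun x hx n hn => by
      rw [← Real.rpow_natCast]; exact Real.rpow_le_rpow_of_exponent_le hx hn
  cases l with
  | nil => norm_num
  | cons c t =>
    simp only [List.mem_cons, forall_eq_or_imp] at hl
    obtain ⟨hc, ht⟩ := hl
    have htail : (t.map (· ^ 2)).prod ≤ (t.map (· ^ ((15 : ℝ) / 2))).prod :=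
      List.prod_map_le_prod_map₀ _ _ (fun x hx => by positivity)
        fun x hx => hpow x (ht x hx) 2 (by norm_num)
    have hc6 := hpow c hc 6 (by norm_num)
    have hc4 : (1 + c ^ 2) ^ 2 * c ^ 2 ≤ 4 * c ^ 6 := by
      have : (1 + c ^ 2) ^ 2 ≤ (2 * c ^ 2) ^ 2 :=
        pow_le_pow_left₀ (by positivity) (by nlinarith [one_le_pow₀ (n := 2) hc]) 2
      nlinarith [sq_nonneg c]
    simp only [List.headD_cons, List.map_cons, List.prod_cons]
    calc (1 + c ^ 2) ^ 2 * (c ^ 2 * (t.map (· ^ 2)).prod)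
        = (1 + c ^ 2) ^ 2 * c ^ 2 * (t.map (· ^ 2)).prod := by ring
      _ ≤ 4 * c ^ ((15 : ℝ) / 2) * (t.map (· ^ ((15 : ℝ) / 2))).prod :=
        mul_le_mul (by linarith) htail
          (List.prod_nonneg fun y hy => by obtain ⟨x, -, rfl⟩ := List.mem_map.mp hy; positivity)
          (by have := one_le_pow₀ (n := 6) hc; linarith)
      _ = _ := by ring

theorem abs_sum_le_abs_sum_add_of_subset {ι : Type*} [DecidableEq ι] {s t : Finset ι}
    {c x : ι → ℝ} {N b : ℝ} (hts : t ⊆ s) (hc : ∑ i ∈ s, |c i| ≤ N) (hb : 0 ≤ b)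
    (hx : ∀ i ∈ s \ t, c i ≠ 0 → |x i| ≤ b) :
    |∑ i ∈ t, c i * x i| ≤ |∑ i ∈ s, c i * x i| + N * b := by
  have hrest : ∑ i ∈ s \ t, |c i * x i| ≤ N * b := by
    calc ∑ i ∈ s \ t, |c i * x i| ≤ ∑ i ∈ s \ t, |c i| * b := by
          refine Finset.sum_le_sum fun i hi => ?_
          rw [abs_mul]
          by_cases hci : c i = 0
          · simp [hci]
          · exact mul_le_mul_of_nonneg_left (hx i hi hci) (abs_nonneg _)
      _ ≤ N * b := by
          rw [← Finset.sum_mul]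
          refine mul_le_mul_of_nonneg_right (le_trans ?_ hc) hb
          exact Finset.sum_le_sum_of_subset_of_nonneg Finset.sdiff_subset fun _ _ _ => abs_nonneg _
  calc |∑ i ∈ t, c i * x i|
      = |∑ i ∈ s, c i * x i - ∑ i ∈ s \ t, c i * x i| := by rw [← Finset.sum_sdiff hts]; ring_nf
    _ ≤ |∑ i ∈ s, c i * x i| + ∑ i ∈ s \ t, |c i * x i| :=
        (abs_sub _ _).trans (add_le_add_right (Finset.abs_sum_le_sum_abs _ _) _)
    _ ≤ _ := by gcongr

theorem sq_le_of_abs_moments_le {u v a b : ℤ} {A B : ℝ} (hb : b ≠ 0) (hab : a + b ≠ 0)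
    (h₂ : |(a : ℝ) * u ^ 2 + b * v ^ 2| ≤ A) (h₁ : |(a : ℝ) * u + b * v| ≤ B) :
    (v : ℝ) ^ 2 ≤ 2 * |(a : ℝ)| * A + 6 * B ^ 2 := by
  have hA : 0 ≤ A := (abs_nonneg _).trans h₂
  have hb1 : (1 : ℝ) ≤ |(b : ℝ)| := by exact_mod_cast Int.one_le_abs hb
  have hab1 : (1 : ℝ) ≤ |(a : ℝ) + b| := by exact_mod_cast Int.one_le_abs hab
  -- eliminate `u` between the two moments
  have key : (b : ℝ) * (a + b) * v ^ 2
      = a * (a * u ^ 2 + b * v ^ 2) - (a * u + b * v) ^ 2 + 2 * (a * u + b * v) * (b * v) := by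
    ring
  have hkey : |(b : ℝ)| * v ^ 2 ≤ |(b : ℝ)| * (|(a : ℝ)| * A + B ^ 2 + 2 * B * |(v : ℝ)|) := by
    have h1 : |(b : ℝ) * (a + b) * v ^ 2| ≤
        |(a : ℝ)| * A + B ^ 2 + 2 * B * (|(b : ℝ)| * |(v : ℝ)|) := by
      rw [key]
      refine (abs_add_le _ _).trans (add_le_add ((abs_sub _ _).trans (add_le_add ?_ ?_)) ?_)
      · rw [abs_mul]; exact mul_le_mul_of_nonneg_left h₂ (abs_nonneg _)
      · rw [abs_pow]; exact pow_le_pow_left₀ (abs_nonneg _) h₁ 2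
      · rw [abs_mul, abs_mul, abs_mul, abs_two]
        gcongr
    rw [abs_mul, abs_mul, abs_pow, sq_abs] at h1
    have h2 : |(b : ℝ)| * v ^ 2 ≤ |(b : ℝ)| * |(a : ℝ) + b| * v ^ 2 :=
      mul_le_mul_of_nonneg_right (le_mul_of_one_le_right (abs_nonneg _) hab1) (sq_nonneg _)
    have h3 : |(a : ℝ)| * A + B ^ 2 ≤ |(b : ℝ)| * (|(a : ℝ)| * A + B ^ 2) :=
      le_mul_of_one_le_left (by positivity) hb1
    linarith
  have hv : (v : ℝ) ^ 2 ≤ |(a : ℝ)| * A + B ^ 2 + 2 * B * |(v : ℝ)| :=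
    le_of_mul_le_mul_left hkey (by linarith)
  nlinarith [sq_nonneg (|(v : ℝ)| - 2 * B), sq_abs (v : ℝ), mul_nonneg (abs_nonneg (a : ℝ)) hA]

theorem abs_mul_abs_le_of_abs_moments_le {u v a b : ℤ} {A B : ℝ} (huv : u ≠ v) (ha : a ≠ 0)
    (hb : b ≠ 0) (h₂ : |(a : ℝ) * u ^ 2 + b * v ^ 2| ≤ A) (h₁ : |(a : ℝ) * u + b * v| ≤ B) :
    |(u : ℝ)| * |(v : ℝ)| ≤ (|(a : ℝ)| + |(b : ℝ)|) * A + 6 * B ^ 2 + (A ^ 2 + B ^ 2) / 4 := by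
  have hA : 0 ≤ A := (abs_nonneg _).trans h₂
  have hB : 0 ≤ B := (abs_nonneg _).trans h₁
  have hAM : |(u : ℝ)| * |(v : ℝ)| ≤ ((u : ℝ) ^ 2 + v ^ 2) / 2 := by
    nlinarith [sq_nonneg (|(u : ℝ)| - |(v : ℝ)|), sq_abs (u : ℝ), sq_abs (v : ℝ)]
  by_cases hab : a + b = 0
  · -- `b = -a`: the moments factor through `a * (u - v)`, a nonzero integer
    obtain rfl : b = -a := by omega
    have hd : (1 : ℝ) ≤ |(a : ℝ) * (u - v)| := by
      exact_mod_cast Int.one_le_abs (mul_ne_zero ha (sub_ne_zero.mpr huv))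
    rw [show (a : ℝ) * u ^ 2 + ((-a : ℤ) : ℝ) * v ^ 2 = a * (u - v) * (u + v) by push_cast; ring,
      abs_mul] at h₂
    rw [show (a : ℝ) * u + ((-a : ℤ) : ℝ) * v = a * (u - v) by push_cast; ring] at h₁
    have hsum : |(u : ℝ) + v| ≤ A := by nlinarith [abs_nonneg ((u : ℝ) + v)]
    have hdiff : |(u : ℝ) - v| ≤ B := by
      rw [abs_mul] at h₁
      have ha1 : (1 : ℝ) ≤ |(a : ℝ)| := by exact_mod_cast Int.one_le_abs ha
      nlinarith [abs_nonneg ((u : ℝ) - v)]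
    have h1 := pow_le_pow_left₀ (abs_nonneg _) hsum 2
    have h2 := pow_le_pow_left₀ (abs_nonneg _) hdiff 2
    rw [sq_abs] at h1 h2
    have : 0 ≤ (|(a : ℝ)| + |((-a : ℤ) : ℝ)|) * A := by positivity
    nlinarith
  · have hv := sq_le_of_abs_moments_le hb hab h₂ h₁
    have hu := sq_le_of_abs_moments_le (u := v) (v := u) (A := A) (B := B) ha (by rwa [add_comm])
      (by rwa [add_comm]) (by rwa [add_comm])
    have : 0 ≤ (A ^ 2 + B ^ 2) / 4 := by positivity
    linarith

theorem one_le_jap (i : ℤ) : 1 ≤ jap i := le_max_right _ _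

theorem abs_le_jap (i : ℤ) : |(i : ℝ)| ≤ jap i := le_max_left _ _

theorem jap_eq_abs {i : ℤ} (h : 1 ≤ |i|) : jap i = |(i : ℝ)| :=
  max_eq_left (by exact_mod_cast h)

theorem one_le_of_coe_eq_map_jap {L : List ℝ} {s : Multiset ℤ} (hL : (L : Multiset ℝ) = s.map jap)
    {x : ℝ} (hx : x ∈ L) : 1 ≤ x := by
  obtain ⟨i, -, rfl⟩ := Multiset.mem_map.mp (hL ▸ Multiset.mem_coe.mpr hx)
  exact one_le_jap i

section TopTwo

variable {F : Finset ℤ} {c : ℤ → ℤ} {I : List ℤ} {N P r : ℝ}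

theorem abs_moments_le_of_subset (hr : 0 ≤ r) (hcN : ∑ i ∈ F, |(c i : ℝ)| ≤ N)
    (hE : |∑ i ∈ F, (c i : ℝ) * i ^ 2| ≤ 10 * N) (hπ : |∑ i ∈ F, (c i : ℝ) * i| ≤ P)
    {T : Finset ℤ} (hTF : T ⊆ F) (hout : ∀ i ∈ F \ T, c i ≠ 0 → |(i : ℝ)| ≤ r) :
    |∑ i ∈ T, (c i : ℝ) * i ^ 2| ≤ 10 * N + N * r ^ 2 ∧ |∑ i ∈ T, (c i : ℝ) * i| ≤ P + N * r := by
  constructor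
  · refine (abs_sum_le_abs_sum_add_of_subset (x := fun i : ℤ => (i : ℝ) ^ 2) (b := r ^ 2) hTF hcN
      (by positivity) fun i hi hci => ?_).trans (add_le_add_left hE _)
    rw [abs_pow]
    exact pow_le_pow_left₀ (abs_nonneg _) (hout i hi (by exact_mod_cast hci)) 2
  · exact (abs_sum_le_abs_sum_add_of_subset (x := fun i : ℤ => (i : ℝ)) hTF hcN hr fun i hi hci =>
      hout i hi (by exact_mod_cast hci)).trans (add_le_add_left hπ _)

theorem getD_map_jap_mul_le (hN : 1 ≤ N) (hP : 0 ≤ P) (hr : 1 ≤ r)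
    (hcN : ∑ i ∈ F, |(c i : ℝ)| ≤ N) (hcF : ∀ i, c i ≠ 0 → i ∈ F)
    (hE : |∑ i ∈ F, (c i : ℝ) * i ^ 2| ≤ 10 * N) (hπ : |∑ i ∈ F, (c i : ℝ) * i| ≤ P)
    (hI : ∀ i, i ∈ I ↔ 2 ≤ |i| ∧ c i ≠ 0) (hrest : ∀ i ∈ I.drop 2, |(i : ℝ)| ≤ r) :
    (I.map jap).getD 0 1 * (I.map jap).getD 1 1 ≤ 42 * (N * (1 + P) * (1 + r ^ 2)) ^ 2 := by
  have hPr : 0 ≤ P * (1 + r ^ 2) := by positivity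
  have hK1 : 1 ≤ N * (1 + P) * (1 + r ^ 2) := by nlinarith
  have hA : 10 * N + N * r ^ 2 ≤ 10 * (N * (1 + P) * (1 + r ^ 2)) := by nlinarith
  have hB : P + N * r ≤ N * (1 + P) * (1 + r ^ 2) := by nlinarith [sq_nonneg (r - 1)]
  have hNK : N ≤ N * (1 + P) * (1 + r ^ 2) := by nlinarith
  set K := N * (1 + P) * (1 + r ^ 2)
  have hmoments : ∀ T ⊆ F, (∀ i ∈ I, i ∉ T → i ∈ I.drop 2) →
      |∑ i ∈ T, (c i : ℝ) * i ^ 2| ≤ 10 * K ∧ |∑ i ∈ T, (c i : ℝ) * i| ≤ K := by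
    intro T hTF hT
    refine (abs_moments_le_of_subset (by linarith) hcN hE hπ hTF fun i hi hci => ?_).imp
      (·.trans hA) (·.trans hB)
    obtain ⟨hiF, hiT⟩ := Finset.mem_sdiff.mp hi
    by_cases h2 : 2 ≤ |i|
    · exact hrest i (hT i ((hI i).mpr ⟨h2, hci⟩) hiT)
    · exact le_trans (by exact_mod_cast (show |i| ≤ 1 by omega)) hr
  have hsingle : ∀ u ∈ I, (∀ i ∈ I, i ≠ u → i ∈ I.drop 2) → jap u * jap u ≤ 42 * K ^ 2 := by
    intro u hu hT
    obtain ⟨hu2, hcu⟩ := (hI u).mp hu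
    have h := (hmoments {u} (by simpa using hcF u hcu) (by simpa using hT)).1
    rw [Finset.sum_singleton, abs_mul, abs_pow, sq_abs] at h
    have hcu1 : (1 : ℝ) ≤ |(c u : ℝ)| := by exact_mod_cast Int.one_le_abs hcu
    rw [jap_eq_abs (by omega), ← sq, sq_abs]
    nlinarith
  rcases I with _ | ⟨u, _ | ⟨v, rest⟩⟩
  · simp only [List.map_nil, List.getD_nil]
    nlinarith
  · have h := hsingle u (by simp) (by simp)
    have hu1 := one_le_jap u
    simp only [List.map_cons, List.map_nil, List.getD_cons_zero, List.getD_cons_succ, List.getD_nil]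
    nlinarith
  · simp only [List.map_cons, List.getD_cons_zero, List.getD_cons_succ]
    by_cases huv : u = v
    · subst huv
      exact hsingle u (by simp) fun i hi hiu => by simpa [hiu] using hi
    obtain ⟨hu2, hcu⟩ := (hI u).mp (by simp)
    obtain ⟨hv2, hcv⟩ := (hI v).mp (by simp)
    have hTF : {u, v} ⊆ F := by
      simp [Finset.insert_subset_iff, hcF u hcu, hcF v hcv]
    obtain ⟨h₂, h₁⟩ := hmoments {u, v} hTF fun i hi hiT => by
      simp only [Finset.mem_insert, Finset.mem_singleton, not_or] at hiT
      simpa [hiT.1, hiT.2] using hi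
    rw [Finset.sum_pair huv] at h₂ h₁
    have hab : |(c u : ℝ)| + |(c v : ℝ)| ≤ K := by
      rw [← Finset.sum_pair huv (f := fun i => |(c i : ℝ)|)]
      refine le_trans ?_ (hcN.trans hNK)
      exact Finset.sum_le_sum_of_subset_of_nonneg hTF fun _ _ _ => abs_nonneg _
    have := abs_mul_abs_le_of_abs_moments_le huv hcu hcv h₂ h₁
    rw [jap_eq_abs (by omega), jap_eq_abs (by omega)]
    nlinarith

end TopTwo

theorem sum_abs_sub_le {ι : Type*} [DecidableEq ι] (α β : ι →₀ ℕ) :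
    ∑ i ∈ α.support ∪ β.support, |(α i : ℝ) - β i| ≤
      (((α.sum fun _ n => n) + β.sum fun _ n => n : ℕ) : ℝ) := by
  calc ∑ i ∈ α.support ∪ β.support, |(α i : ℝ) - β i|
      ≤ ∑ i ∈ α.support ∪ β.support, ((α i : ℝ) + β i) := Finset.sum_le_sum fun i _ => by
        have := (α i).cast_nonneg (α := ℝ)
        have := (β i).cast_nonneg (α := ℝ)
        exact abs_sub_le_iff.mpr ⟨by linarith, by linarith⟩
    _ = _ := by
      rw [Finset.sum_add_distrib,
        Finsupp.sum_of_support_subset α Finset.subset_union_left _ fun _ _ => rfl,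
        Finsupp.sum_of_support_subset β Finset.subset_union_right _ fun _ _ => rfl]
      push_cast; rfl

section Differences

variable (α β : ℤ →₀ ℕ)

noncomputable def highDiff : ℤ →₀ ℕ := ((α - β) + (β - α)).filter fun i => 2 ≤ |i|

variable {α β}

theorem cast_highDiff_apply {i : ℤ} (hi : 2 ≤ |i|) :
    (highDiff α β i : ℝ) = |(α i : ℝ) - β i| := by
  simp only [highDiff, Finsupp.filter_apply, if_pos hi, Finsupp.add_apply, Finsupp.tsub_apply]
  rcases le_total (α i) (β i) with h | h
  · rw [Nat.sub_eq_zero_of_le h, zero_add, Nat.cast_sub h, abs_of_nonpos (by simpa using h)]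
    ring
  · rw [Nat.sub_eq_zero_of_le h, add_zero, Nat.cast_sub h, abs_of_nonneg (by simpa using h)]

theorem highDiff_ne_zero_iff {i : ℤ} : highDiff α β i ≠ 0 ↔ 2 ≤ |i| ∧ α i ≠ β i := by
  simp only [highDiff, Finsupp.filter_apply, Finsupp.add_apply, Finsupp.tsub_apply]
  split_ifs <;> omega

theorem highDiff_le_add : highDiff α β ≤ α + β := fun i => by
  simp only [highDiff, Finsupp.filter_apply, Finsupp.add_apply, Finsupp.tsub_apply]
  split_ifs <;> omega

theorem prod_filter_two_le_abs_le_prod_highDiff :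
    ∏ i ∈ (α.support ∪ β.support).filter (fun i => 2 ≤ |i|), (1 + |(α i : ℝ) - β i| * jap i) ≤
      ((highDiff α β).toMultiset.map fun i => 2 * jap i).prod := by
  have hsupp : (highDiff α β).support ⊆ (α.support ∪ β.support).filter (fun i => 2 ≤ |i|) := by
    intro i hi
    obtain ⟨h2, hne⟩ := highDiff_ne_zero_iff.mp (Finsupp.mem_support_iff.mp hi)
    refine Finset.mem_filter.mpr ⟨?_, h2⟩
    by_cases hα : α i = 0
    · exact Finset.mem_union_right _ (Finsupp.mem_support_iff.mpr (by omega))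
    · exact Finset.mem_union_left _ (Finsupp.mem_support_iff.mpr hα)
  rw [Finset.prod_multiset_map_count, Finsupp.toFinset_toMultiset]
  simp only [Finsupp.count_toMultiset]
  calc _ ≤ ∏ i ∈ (α.support ∪ β.support).filter (fun i => 2 ≤ |i|), (2 * jap i) ^ highDiff α β i :=
        Finset.prod_le_prod (fun i _ => by positivity [one_le_jap i]) fun i hi => by
          rw [← cast_highDiff_apply (Finset.mem_filter.mp hi).2]
          calc 1 + (highDiff α β i : ℝ) * jap i ≤ (1 + jap i) ^ highDiff α β i :=
                one_add_mul_le_pow (by linarith [one_le_jap i]) _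
            _ ≤ (2 * jap i) ^ highDiff α β i :=
                pow_le_pow_left₀ (by linarith [one_le_jap i]) (by linarith [one_le_jap i]) _
    _ = _ := (Finset.prod_subset hsupp fun i _ hi => by
        rw [Finsupp.notMem_support_iff.mp hi, pow_zero]).symm

end Differences

theorem prod_filter_not_two_le_abs_le (α β : ℤ →₀ ℕ) {N : ℝ} (hN : 1 ≤ N)
    (hdiff : ∑ i ∈ α.support ∪ β.support, |(α i : ℝ) - β i| ≤ N) :
    ∏ i ∈ (α.support ∪ β.support).filter (fun i => ¬ 2 ≤ |i|), (1 + |(α i : ℝ) - β i| * jap i) ≤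
      (2 * N) ^ 3 := by
  set s := (α.support ∪ β.support).filter (fun i => ¬ 2 ≤ |i|)
  have hcard : s.card ≤ 3 := by
    refine (Finset.card_le_card (t := Finset.Icc (-1) 1) fun i hi => ?_).trans (by simp)
    have := abs_lt.mp (not_le.mp (Finset.mem_filter.mp hi).2)
    exact Finset.mem_Icc.mpr ⟨by omega, by omega⟩
  calc ∏ i ∈ s, (1 + |(α i : ℝ) - β i| * jap i) ≤ ∏ _i ∈ s, 2 * N :=
        Finset.prod_le_prod (fun i _ => by positivity [one_le_jap i]) fun i hi => by
          obtain ⟨hiF, hi2⟩ := Finset.mem_filter.mp hi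
          rw [show jap i = 1 from max_eq_right (by exact_mod_cast (by omega : |i| ≤ 1)), mul_one]
          have := Finset.single_le_sum (fun j _ => abs_nonneg ((α j : ℝ) - β j)) hiF
          linarith
    _ = (2 * N) ^ s.card := Finset.prod_const _
    _ ≤ (2 * N) ^ 3 := pow_le_pow_right₀ (by linarith) hcard

theorem prod_filter_two_le_abs_le (α β : ℤ →₀ ℕ) {L : List ℝ} {N π : ℝ}
    (hsort : L.Pairwise (· ≥ ·)) (hL : (L : Multiset ℝ) = Multiset.map jap (α + β).toMultiset)
    (hN : 1 ≤ N) (hdiff : ∑ i ∈ α.support ∪ β.support, |(α i : ℝ) - β i| ≤ N)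
    (hπ : π = ∑ i ∈ α.support ∪ β.support, (i : ℝ) * ((α i : ℝ) - β i))
    (hsmall : |∑ i ∈ α.support ∪ β.support, ((α i : ℝ) - β i) * (i : ℝ) ^ 2| ≤ 10 * N) :
    ∏ i ∈ (α.support ∪ β.support).filter (fun i => 2 ≤ |i|), (1 + |(α i : ℝ) - β i| * jap i) ≤
      168 * (N * (1 + |π|) * (1 + (L.drop 2).headD 1 ^ 2)) ^ 2 *
        ((L.drop 2).map (· ^ 2)).prod := by
  set c : ℤ → ℤ := fun i => α i - β i
  have hc : ∀ i, (c i : ℝ) = α i - β i := fun i => by push_cast [c]; ring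
  have hc0 : ∀ i, c i ≠ 0 ↔ α i ≠ β i := fun i => by simp only [c]; omega
  have hcF : ∀ i, c i ≠ 0 → i ∈ α.support ∪ β.support := fun i hi => by
    have := (hc0 i).mp hi
    simp only [Finset.mem_union, Finsupp.mem_support_iff]
    omega
  obtain ⟨I, hI, hIs⟩ := (highDiff α β).toMultiset.exists_coe_eq_pairwise_map_ge jap
  have hmem : ∀ i, i ∈ I ↔ 2 ≤ |i| ∧ c i ≠ 0 := fun i => by
    rw [hc0, ← highDiff_ne_zero_iff, ← Multiset.mem_coe, hI, Finsupp.mem_toMultiset,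
      Finsupp.mem_support_iff]
  have hsub : (I.map jap).Sublist L := by
    refine List.sublist_of_subperm_of_pairwise (Multiset.coe_le.mp ?_) hIs hsort
    rw [← Multiset.map_coe, hI, hL]
    exact Multiset.map_le_map (Finsupp.toMultiset_strictMono.monotone highDiff_le_add)
  have hL1 : ∀ x ∈ L.drop 2, 1 ≤ x := fun x hx =>
    one_le_of_coe_eq_map_jap hL (List.mem_of_mem_drop hx)
  have hr : 1 ≤ (L.drop 2).headD 1 := by
    cases h : L.drop 2 with
    | nil => exact le_rfl
    | cons x t => exact hL1 x (h ▸ List.mem_cons_self)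
  have hrest : ∀ i ∈ I.drop 2, |(i : ℝ)| ≤ (L.drop 2).headD 1 := fun i hi =>
    (abs_le_jap i).trans <| List.le_headD_of_pairwise_ge _ (hsort.sublist (List.drop_sublist _ _))
      ((hsub.drop 2).subset (List.map_drop .. ▸ List.mem_map_of_mem hi))
  have htop := getD_map_jap_mul_le hN (abs_nonneg π) hr (by simpa [hc] using hdiff) hcF
    (by simpa [hc] using hsmall) (by simp [hc, hπ, mul_comm]) hmem hrest
  have hI2 : ∀ x ∈ I.map jap, 2 ≤ x := fun x hx => by
    obtain ⟨i, hi, rfl⟩ := List.mem_map.mp hx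
    exact le_trans (by exact_mod_cast ((hmem i).mp hi).1) (abs_le_jap i)
  calc _ ≤ ((highDiff α β).toMultiset.map fun i => 2 * jap i).prod :=
        prod_filter_two_le_abs_le_prod_highDiff
    _ = ((I.map jap).map (2 * ·)).prod := by
        rw [← hI, Multiset.map_coe, Multiset.prod_coe, List.map_map]; rfl
    _ ≤ 4 * ((I.map jap).getD 0 1 * (I.map jap).getD 1 1) * ((L.drop 2).map (· ^ 2)).prod :=
        List.prod_map_two_mul_le hI2 hL1 (hsub.drop 2)
    _ ≤ _ := mul_le_mul_of_nonneg_right (by linarith) (List.prod_nonneg fun y hy => by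
        obtain ⟨x, -, rfl⟩ := List.mem_map.mp hy; positivity)

theorem prod_one_add_abs_diff_le_general
    (α β : ℤ →₀ ℕ)
    (hmass1 : 1 ≤ α.sum fun _ n => n)
    (L : List ℝ) (hsort : L.Pairwise (· ≥ ·))
    (hL : (L : Multiset ℝ) = Multiset.map jap (α + β).toMultiset)
    (N : ℕ) (hN : N = (α.sum fun _ n => n) + β.sum fun _ n => n)
    (π : ℝ)
    (hπ : π = ∑ i ∈ α.support ∪ β.support, (i : ℝ) * ((α i : ℝ) - (β i : ℝ)))
    (hsmall : |∑ i ∈ α.support ∪ β.support, ((α i : ℝ) - (β i : ℝ)) * (i : ℝ) ^ 2| ≤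
      10 * ∑ i ∈ α.support ∪ β.support, |(α i : ℝ) - (β i : ℝ)|) :
    ∏ i ∈ α.support ∪ β.support, (1 + |(α i : ℝ) - (β i : ℝ)| * jap i) ≤
      Real.exp 27 * (1 + |π|) ^ 3 * (N : ℝ) ^ 6 *
        ((L.drop 2).map fun x => x ^ ((15 : ℝ) / 2)).prod := by
  have hN1 : (1 : ℝ) ≤ N := by rw [hN]; exact_mod_cast le_add_right hmass1
  have hdiff := hN ▸ sum_abs_sub_le α β
  have hlow := prod_filter_not_two_le_abs_le α β hN1 hdiff
  have hhigh := prod_filter_two_le_abs_le α β hsort hL hN1 hdiff hπ (hsmall.trans (by linarith))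
  have hL1 : ∀ x ∈ L.drop 2, 1 ≤ x := fun x hx =>
    one_le_of_coe_eq_map_jap hL (List.mem_of_mem_drop hx)
  have hV : 1 ≤ ((L.drop 2).map fun x => x ^ ((15 : ℝ) / 2)).prod :=
    List.one_le_prod fun y hy => by
      obtain ⟨x, hx, rfl⟩ := List.mem_map.mp hy
      exact Real.one_le_rpow (hL1 x hx) (by norm_num)
  have hexp : (5376 : ℝ) ≤ Real.exp 27 := calc
    (5376 : ℝ) ≤ 2 ^ 27 := by norm_num
    _ ≤ Real.exp 1 ^ 27 := pow_le_pow_left₀ (by norm_num) (by linarith [Real.add_one_le_exp 1]) _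
    _ = Real.exp 27 := by rw [← Real.exp_nat_mul]; norm_num
  have hf0 : ∀ s : Finset ℤ, 0 ≤ ∏ i ∈ s, (1 + |(α i : ℝ) - β i| * jap i) := fun s =>
    Finset.prod_nonneg fun i _ => by positivity [one_le_jap i]
  rw [← Finset.prod_filter_mul_prod_filter_not _ (fun i => 2 ≤ |i|)]
  set r := (L.drop 2).headD 1
  set V := ((L.drop 2).map fun x => x ^ ((15 : ℝ) / 2)).prod
  calc _ ≤ 168 * (N * (1 + |π|) * (1 + r ^ 2)) ^ 2 * ((L.drop 2).map (· ^ 2)).prod * (2 * N) ^ 3 :=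
        mul_le_mul hhigh hlow (hf0 _) ((hf0 _).trans hhigh)
    _ = 1344 * (1 + |π|) ^ 2 * N ^ 5 * ((1 + r ^ 2) ^ 2 * ((L.drop 2).map (· ^ 2)).prod) := by
        ring
    _ ≤ 1344 * (1 + |π|) ^ 2 * N ^ 5 * (4 * V) :=
        mul_le_mul_of_nonneg_left (List.one_add_sq_headD_sq_mul_prod_le hL1) (by positivity)
    _ = 5376 * (1 + |π|) ^ 2 * N ^ 5 * V := by ring
    _ ≤ Real.exp 27 * (1 + |π|) ^ 3 * N ^ 6 * V := by
        gcongr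
        · linarith [abs_nonneg π]
        all_goals norm_num

/-- If `|∑ (α_i−β_i) i²| ≤ 10 ∑ |α_i−β_i|`, then
`∏_i (1 + |α_i−β_i|⟨i⟩) ≤ e^{27}(1+|π|)³ N⁶ ∏_{l≥3} n̂_l^{15/2}` (the decreasing
rearrangement `n̂` being encoded by the sorted list `L`). -/
theorem prod_one_add_abs_diff_le
    (α β : ℤ →₀ ℕ)
    (hmass : (α.sum fun _ n => n) = β.sum fun _ n => n)
    (hmass1 : 1 ≤ α.sum fun _ n => n)
    (L : List ℝ) (hsort : L.Pairwise (· ≥ ·))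
    (hL : (L : Multiset ℝ) = Multiset.map jap (α + β).toMultiset)
    (N : ℕ) (hN : N = (α.sum fun _ n => n) + β.sum fun _ n => n)
    (π : ℝ)
    (hπ : π = ∑ i ∈ α.support ∪ β.support, (i : ℝ) * ((α i : ℝ) - (β i : ℝ)))
    (hsmall : |∑ i ∈ α.support ∪ β.support, ((α i : ℝ) - (β i : ℝ)) * (i : ℝ) ^ 2| ≤
      10 * ∑ i ∈ α.support ∪ β.support, |(α i : ℝ) - (β i : ℝ)|) :
    ∏ i ∈ α.support ∪ β.support, (1 + |(α i : ℝ) - (β i : ℝ)| * jap i) ≤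
      Real.exp 27 * (1 + |π|) ^ 3 * (N : ℝ) ^ 6 *
        ((L.drop 2).map fun x => x ^ ((15 : ℝ) / 2)).prod :=
  prod_one_add_abs_diff_le_general α β hmass1 L hsort hL N hN π hπ hsmall
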